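/- arXiv:2605.10218 — 2 statements merged into one kernel-verified Lean document; each statement's English description precedes it below -/
import Mathlib

section
/- Let P, Q be strictly positive probability mass functions on a finite set S, set δ(y) = log(Q(y)/P(y)), and suppose |δ(y)| ≤ ε for all y with ε ≤ 1. Then |KL(P‖Q) − (1/2)·E_P[δ²]| ≤ C·ε³ for an absolute constant C (e.g. C = 1), where KL(P‖Q) = ∑_y P(y) log(P(y)/Q(y)) = −E_P[δ] and E_P[δ²] = ∑_y P(y) δ(y)². -/
lemma exp_taylor2_bound (x ε : ℝ) (hx : |x| ≤ ε) (hε : ε ≤ 1) :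
    |Real.exp x - 1 - x - x ^ 2 / 2| ≤ ε ^ 3 := by
  have hx1 : |x| ≤ 1 := hx.trans hε
  have h := Real.exp_bound hx1 (by norm_num : 0 < 3)
  have hsum : ∑ i ∈ Finset.range 3, x ^ i / (Nat.factorial i : ℝ)
      = 1 + x + x ^ 2 / 2 := by
    simp [Finset.sum_range_succ, Nat.factorial]
  rw [hsum] at h
  have h2 : |Real.exp x - 1 - x - x ^ 2 / 2| ≤ |x| ^ 3 * (4 / (6 * 3)) := by
    have : Real.exp x - 1 - x - x ^ 2 / 2 = Real.exp x - (1 + x + x ^ 2 / 2) := by ring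
    rw [this]
    convert h using 2 <;> norm_num [Nat.factorial]
  have hx3 : |x| ^ 3 ≤ ε ^ 3 := pow_le_pow_left₀ (abs_nonneg x) hx 3
  have hε0 : (0:ℝ) ≤ ε := (abs_nonneg x).trans hx
  nlinarith [abs_nonneg x, pow_nonneg (abs_nonneg x) 3]

theorem forward_kl_second_order (S : Type*) [Fintype S]
    (P Q : S → ℝ) (hP : ∀ y, 0 < P y) (hQ : ∀ y, 0 < Q y)
    (hPsum : ∑ y, P y = 1) (hQsum : ∑ y, Q y = 1)
    (ε : ℝ) (hε : ε ≤ 1)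
    (hbound : ∀ y, |Real.log (Q y / P y)| ≤ ε) :
    |(∑ y, P y * Real.log (P y / Q y))
        - (1 / 2) * ∑ y, P y * (Real.log (Q y / P y)) ^ 2| ≤ 1 * ε ^ 3 := by
  have hS : Nonempty S := by
    by_contra h
    rw [not_nonempty_iff] at h
    simp [Finset.univ_eq_empty] at hPsum
  have hε0 : 0 ≤ ε := (abs_nonneg _).trans (hbound (Classical.arbitrary S))
  set δ : S → ℝ := fun y => Real.log (Q y / P y) with hδ
  have hexp : ∀ y, Real.exp (δ y) = Q y / P y := fun y =>
    Real.exp_log (div_pos (hQ y) (hP y))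
  have hsumexp : ∑ y, P y * Real.exp (δ y) = 1 := by
    rw [← hQsum]
    refine Finset.sum_congr rfl fun y _ => ?_
    rw [hexp y, mul_comm]
    exact div_mul_cancel₀ _ (hP y).ne'
  have hlog : ∀ y, Real.log (P y / Q y) = -δ y := fun y => by
    rw [hδ, ← Real.log_inv, inv_div]
  have key : (∑ y, P y * Real.log (P y / Q y))
      - (1 / 2) * ∑ y, P y * δ y ^ 2
      = ∑ y, P y * (Real.exp (δ y) - 1 - δ y - δ y ^ 2 / 2) := by
    have expand : ∀ y, P y * (Real.exp (δ y) - 1 - δ y - δ y ^ 2 / 2)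
        = P y * Real.exp (δ y) - P y - (- (P y * Real.log (P y / Q y)))
          - (1/2) * (P y * δ y ^ 2) := by
      intro y; rw [hlog y]; ring
    rw [Finset.sum_congr rfl fun y _ => expand y]
    simp only [Finset.sum_sub_distrib, Finset.sum_neg_distrib, ← Finset.mul_sum,
      hsumexp, hPsum]
    ring
  rw [key]
  calc |∑ y, P y * (Real.exp (δ y) - 1 - δ y - δ y ^ 2 / 2)|
      ≤ ∑ y, |P y * (Real.exp (δ y) - 1 - δ y - δ y ^ 2 / 2)| :=
        Finset.abs_sum_le_sum_abs _ _
    _ ≤ ∑ y, P y * ε ^ 3 := by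
        refine Finset.sum_le_sum fun y _ => ?_
        rw [abs_mul, abs_of_pos (hP y)]
        exact mul_le_mul_of_nonneg_left
          (exp_taylor2_bound (δ y) ε (hbound y) hε) (hP y).le
    _ = 1 * ε ^ 3 := by rw [← Finset.sum_mul, hPsum]
end

section
/- Let X be a random variable on a finite probability space with values in ℝ, satisfying E[e^X] = 1 and |X| ≤ ε ≤ 1 almost surely. Then 0 ≤ −E[X] ≤ (e/2)·E[X²] ≤ (e/2)·ε². -/
theorem mean_bound_from_exp_normalization (Ω : Type*) [Fintype Ω]
    (p : Ω → ℝ) (hp : ∀ ω, 0 ≤ p ω) (hpsum : ∑ ω, p ω = 1)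
    (X : Ω → ℝ) (hnorm : ∑ ω, p ω * Real.exp (X ω) = 1)
    (ε : ℝ) (hε : ε ≤ 1)
    (hbound : ∀ ω, p ω ≠ 0 → |X ω| ≤ ε) :
    0 ≤ -(∑ ω, p ω * X ω) ∧
      -(∑ ω, p ω * X ω) ≤ (Real.exp 1 / 2) * ∑ ω, p ω * (X ω) ^ 2 ∧
      (Real.exp 1 / 2) * (∑ ω, p ω * (X ω) ^ 2) ≤ (Real.exp 1 / 2) * ε ^ 2 := by
  have he : (2.7182818283 : ℝ) < Real.exp 1 := Real.exp_one_gt_d9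
  have hc : (3/4 : ℝ) ≤ Real.exp 1 / 2 := by linarith
  have hc0 : (0:ℝ) ≤ Real.exp 1 / 2 := by linarith
  have haux : ∀ x : ℝ, |x| ≤ 1 → Real.exp x ≤ 1 + x + (Real.exp 1 / 2) * x ^ 2 := by
    intro x hx
    have h := Real.exp_bound hx (by norm_num : 0 < 2)
    have hsum : ∑ i ∈ Finset.range 2, x ^ i / (Nat.factorial i) = 1 + x := by
      simp [Finset.sum_range_succ]
    rw [hsum] at h
    have h2 := (abs_le.mp h).2
    have habs : |x| ^ 2 = x ^ 2 := sq_abs x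
    simp [Nat.factorial] at h2
    nlinarith [sq_nonneg x, sq_abs x]
  -- E[X] ≤ 0
  have hEX : ∑ ω, p ω * X ω ≤ 0 := by
    have h : ∀ ω ∈ Finset.univ, p ω * (1 + X ω) ≤ p ω * Real.exp (X ω) :=
      fun ω _ => mul_le_mul_of_nonneg_left (by linarith [Real.add_one_le_exp (X ω)]) (hp ω)
    have hs := Finset.sum_le_sum h
    rw [hnorm] at hs
    have : ∑ ω, p ω * (1 + X ω) = (∑ ω, p ω) + ∑ ω, p ω * X ω := by
      simp [mul_add, Finset.sum_add_distrib]
    rw [this, hpsum] at hs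
    linarith
  -- upper bound
  have h2 : -(∑ ω, p ω * X ω) ≤ (Real.exp 1 / 2) * ∑ ω, p ω * (X ω) ^ 2 := by
    have h : ∀ ω ∈ Finset.univ,
        p ω * Real.exp (X ω) ≤ p ω * (1 + X ω + (Real.exp 1 / 2) * X ω ^ 2) := by
      intro ω _
      rcases eq_or_ne (p ω) 0 with h0 | h0
      · simp [h0]
      · exact mul_le_mul_of_nonneg_left (haux _ ((hbound ω h0).trans hε)) (hp ω)
    have hs := Finset.sum_le_sum h
    rw [hnorm] at hs
    have hexp : ∑ ω, p ω * (1 + X ω + (Real.exp 1 / 2) * X ω ^ 2)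
        = (∑ ω, p ω) + (∑ ω, p ω * X ω) + (Real.exp 1 / 2) * ∑ ω, p ω * X ω ^ 2 := by
      simp [mul_add, Finset.sum_add_distrib, Finset.mul_sum, mul_left_comm]
    rw [hexp, hpsum] at hs
    linarith
  -- variance bound
  have h3 : ∑ ω, p ω * (X ω) ^ 2 ≤ ε ^ 2 := by
    have h : ∀ ω ∈ Finset.univ, p ω * (X ω) ^ 2 ≤ p ω * ε ^ 2 := by
      intro ω _
      rcases eq_or_ne (p ω) 0 with h0 | h0
      · simp [h0]
      · refine mul_le_mul_of_nonneg_left ?_ (hp ω)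
        calc (X ω) ^ 2 = |X ω| ^ 2 := (sq_abs _).symm
          _ ≤ ε ^ 2 := by
            have := hbound ω h0
            have h0' := abs_nonneg (X ω)
            nlinarith
    have hs := Finset.sum_le_sum h
    calc ∑ ω, p ω * (X ω) ^ 2 ≤ ∑ ω, p ω * ε ^ 2 := hs
      _ = ε ^ 2 := by rw [← Finset.sum_mul, hpsum, one_mul]
  exact ⟨by linarith, h2, mul_le_mul_of_nonneg_left h3 hc0⟩
end
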